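/- Let (R, 𝔪) be a Noetherian local commutative ring which has the Artin approximation property for the 𝔪-adic filtration (𝔪^j)_{j∈ℕ}. Let I_• be any filtration of R such that for every j there exists d_j ∈ ℕ with I_{d_j} ⊆ 𝔪^j. Then R has the Artin approximation property for I_•. -/

import Mathlib

/-!
Given a formal solution `ŷ` for `I_•` and a level `N`, set `J = I_{N+1}`. By Artin–Rees there
is `c` with `𝔪^{c+k} ∩ J ⊆ 𝔪^k J`, so along a subsequence `z_j = ŷ_{e_j}` with
`I_{e_j} ⊆ 𝔪^{c+j+1}` the increments lie in `𝔪^{j+1} J`. Writing `z_j = ŷ_N + ∑ₜ u_{j,t} g_t` for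
generators `g` of `J`, the coefficients `u_j` form an `𝔪`-adic formal solution of the system
`F(ŷ_N + ∑ₜ U_t g_t) = 0`; a true solution `U` gives `y = ŷ_N + ∑ₜ U_t g_t` with `y - ŷ_N ∈ J`.
-/

/-- `R` has the Artin approximation property for the filtration `I`. -/
def HasAP {R : Type*} [CommRing R] (I : ℕ → Ideal R) : Prop :=
  ∀ (n s : ℕ) (F : Fin s → MvPolynomial (Fin n) R) (yhat : ℕ → Fin n → R),
    (∀ N i, yhat (N + 1) i - yhat N i ∈ I (N + 1)) →
    (∀ N k, MvPolynomial.eval (yhat N) (F k) ∈ I (N + 1)) →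
    ∀ N, ∃ y : Fin n → R,
      (∀ k, MvPolynomial.eval y (F k) = 0) ∧ ∀ i, y i - yhat N i ∈ I (N + 1)

open MvPolynomial

theorem sub_mem_of_succ_sub_mem {R M : Type*} [Ring R] [AddCommGroup M] [Module R M]
    {I : ℕ → Submodule R M} (hI : Antitone I) {x : ℕ → M}
    (hx : ∀ N, x (N + 1) - x N ∈ I (N + 1)) {a b : ℕ} (hab : a ≤ b) :
    x b - x a ∈ I (a + 1) := by
  induction b, hab using Nat.le_induction with
  | base => simp
  | succ b hab ih =>
    rw [← sub_add_sub_cancel]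
    exact add_mem (hI (by omega) (hx b)) ih

theorem Ideal.exists_pow_add_inf_le_pow_mul {R : Type*} [CommRing R] [IsNoetherianRing R]
    (𝔪 J : Ideal R) : ∃ c, ∀ k, 𝔪 ^ (c + k) ⊓ J ≤ 𝔪 ^ k * J := by
  obtain ⟨c, hc⟩ := Ideal.exists_pow_inf_eq_pow_smul 𝔪 (J : Submodule R R)
  refine ⟨c, fun k => ?_⟩
  have h := hc (c + k) (Nat.le_add_right c k)
  simp only [smul_eq_mul, Ideal.mul_top, add_tsub_cancel_left] at h
  rw [h]
  exact Ideal.mul_mono_right inf_le_right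

theorem exists_monotone_forall_le {α : Type*} [Preorder α] {I K : ℕ → α} (hI : Antitone I)
    (h : ∀ j, ∃ d, I d ≤ K j) (N : ℕ) :
    ∃ e : ℕ → ℕ, Monotone e ∧ (∀ j, N ≤ e j) ∧ ∀ j, I (e j) ≤ K j := by
  choose d hd using h
  refine ⟨fun j => N + ∑ k ∈ Finset.range (j + 1), d k, fun a b hab => ?_,
    fun j => Nat.le_add_right _ _, fun j => (hI ?_).trans (hd j)⟩
  · exact Nat.add_le_add_left
      (Finset.sum_le_sum_of_subset (Finset.range_subset_range.mpr (by omega))) N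
  · exact (Finset.single_le_sum (fun _ _ => Nat.zero_le _) (Finset.self_mem_range_succ j)).trans
      (Nat.le_add_left _ _)

theorem exists_coeff_seq_of_sub_mem_mul_span {R ι : Type*} [CommRing R] [Fintype ι]
    (K : ℕ → Ideal R) (g : ι → R) (z : ℕ → R) (h₀ : z 0 ∈ Ideal.span (Set.range g))
    (hz : ∀ j, z (j + 1) - z j ∈ K (j + 1) * Ideal.span (Set.range g)) :
    ∃ u : ℕ → ι → R, (∀ j t, u (j + 1) t - u j t ∈ K (j + 1)) ∧ ∀ j, ∑ t, u j t * g t = z j := by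
  obtain ⟨u₀, hu₀⟩ := Ideal.mem_span_range_iff_exists_fun.mp h₀
  have hv : ∀ j, ∃ v : ι → R, (∀ t, v t ∈ K (j + 1)) ∧ ∑ t, v t * g t = z (j + 1) - z j := by
    intro j
    obtain ⟨a, ha, hsum⟩ := (Submodule.mem_ideal_smul_span_iff_exists_sum _ g _).mp (hz j)
    refine ⟨a, ha, ?_⟩
    rw [← hsum, Finsupp.sum_fintype _ _ (fun t => zero_smul R (g t))]
    rfl
  choose v hvK hvsum using hv
  refine ⟨fun j t => u₀ t + ∑ l ∈ Finset.range j, v l t, fun j t => ?_, fun j => ?_⟩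
  · simpa [Finset.sum_range_succ] using hvK j t
  · induction j with
    | zero => simpa using hu₀
    | succ j ih =>
      simp only [Finset.sum_range_succ, add_mul, Finset.sum_add_distrib] at ih ⊢
      rw [← add_assoc, ih, hvsum]
      abel

namespace HasAP

variable {R : Type*} [CommRing R]

theorem exists_solution {I : ℕ → Ideal R} (hAP : HasAP I) {σ κ : Type*} [Finite σ] [Finite κ]
    (F : κ → MvPolynomial σ R) (yhat : ℕ → σ → R)
    (hdiff : ∀ N i, yhat (N + 1) i - yhat N i ∈ I (N + 1))
    (hF : ∀ N k, eval (yhat N) (F k) ∈ I (N + 1)) (N : ℕ) :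
    ∃ y : σ → R, (∀ k, eval y (F k) = 0) ∧ ∀ i, y i - yhat N i ∈ I (N + 1) := by
  obtain ⟨n, ⟨eσ⟩⟩ := Finite.exists_equiv_fin σ
  obtain ⟨s, ⟨eκ⟩⟩ := Finite.exists_equiv_fin κ
  obtain ⟨y, hy, hyN⟩ := hAP n s (fun k => rename eσ (F (eκ.symm k)))
    (fun N => yhat N ∘ eσ.symm) (fun N i => hdiff N _)
    (fun N k => by simpa [eval_rename, Function.comp_assoc] using hF N (eκ.symm k)) N
  refine ⟨y ∘ eσ, fun k => ?_, fun i => by simpa using hyN (eσ i)⟩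
  simpa [eval_rename] using hy (eκ k)

theorem exists_solution_sub_mem_span {𝔪 : Ideal R} (hAP : HasAP (𝔪 ^ ·))
    {σ κ τ : Type*} [Finite σ] [Finite κ] [Fintype τ]
    (F : κ → MvPolynomial σ R) (y₀ : σ → R) (g : τ → R) (u : ℕ → σ → τ → R)
    (hu : ∀ j i t, u (j + 1) i t - u j i t ∈ 𝔪 ^ (j + 1))
    (hF : ∀ j k, eval (fun i => y₀ i + ∑ t, u j i t * g t) (F k) ∈ 𝔪 ^ (j + 1)) :
    ∃ y : σ → R, (∀ k, eval y (F k) = 0) ∧ ∀ i, y i - y₀ i ∈ Ideal.span (Set.range g) := by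
  let φ : σ → MvPolynomial (σ × τ) R := fun i => C (y₀ i) + ∑ t, C (g t) * X (i, t)
  have heval : ∀ (U : σ × τ → R) p,
      eval U (bind₁ φ p) = eval (fun i => y₀ i + ∑ t, U (i, t) * g t) p := by
    intro U p
    change eval₂Hom (RingHom.id R) U (bind₁ φ p) = _
    rw [eval₂Hom_bind₁]
    simp [φ, mul_comm]
  obtain ⟨U, hU, -⟩ := hAP.exists_solution (fun k => bind₁ φ (F k)) (fun j p => u j p.1 p.2)
    (fun j p => hu j p.1 p.2) (fun j k => by simpa only [heval] using hF j k) 0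
  refine ⟨fun i => y₀ i + ∑ t, U (i, t) * g t, fun k => by simpa only [heval] using hU k,
    fun i => ?_⟩
  rw [add_sub_cancel_left]
  exact Ideal.mem_span_range_iff_exists_fun.mpr ⟨_, rfl⟩

theorem exists_solution_sub_mem {𝔪 J : Ideal R} (hAP : HasAP (𝔪 ^ ·)) (hJ : J.FG)
    {σ κ : Type*} [Finite σ] [Finite κ] (F : κ → MvPolynomial σ R) (y₀ : σ → R)
    (z : ℕ → σ → R) (hz₀ : ∀ i, z 0 i - y₀ i ∈ J)
    (hz : ∀ j i, z (j + 1) i - z j i ∈ 𝔪 ^ (j + 1) * J)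
    (hF : ∀ j k, eval (z j) (F k) ∈ 𝔪 ^ (j + 1)) :
    ∃ y : σ → R, (∀ k, eval y (F k) = 0) ∧ ∀ i, y i - y₀ i ∈ J := by
  obtain ⟨m, g, rfl⟩ := Submodule.fg_iff_exists_fin_generating_family.mp hJ
  have hcoeff : ∀ i, ∃ u : ℕ → Fin m → R, (∀ j t, u (j + 1) t - u j t ∈ 𝔪 ^ (j + 1)) ∧
      ∀ j, ∑ t, u j t * g t = z j i - y₀ i := fun i =>
    exists_coeff_seq_of_sub_mem_mul_span (𝔪 ^ ·) g (fun j => z j i - y₀ i) (hz₀ i)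
      (fun j => by simpa only [sub_sub_sub_cancel_right] using hz j i)
  choose u hu hsum using hcoeff
  refine hAP.exists_solution_sub_mem_span F y₀ g (fun j i t => u i j t)
    (fun j i t => hu i j t) (fun j k => ?_)
  simpa only [hsum, add_sub_cancel] using hF j k

end HasAP

theorem hasAP_of_le_maximalIdeal_pow_general
    {R : Type*} [CommRing R] [IsNoetherianRing R] [IsLocalRing R]
    (hAP : HasAP (fun j => IsLocalRing.maximalIdeal R ^ j))
    (I : ℕ → Ideal R) (hIanti : Antitone I)
    (hsub : ∀ j : ℕ, ∃ d : ℕ, I d ≤ IsLocalRing.maximalIdeal R ^ j) :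
    HasAP I := by
  intro n s F yhat hdiff hF N
  obtain ⟨c, hc⟩ := Ideal.exists_pow_add_inf_le_pow_mul (IsLocalRing.maximalIdeal R) (I (N + 1))
  obtain ⟨e, he, hNe, hIe⟩ := exists_monotone_forall_le hIanti (fun j => hsub (c + (j + 1))) N
  have htel : ∀ {a b}, a ≤ b → ∀ i, yhat b i - yhat a i ∈ I (a + 1) := fun hab i =>
    sub_mem_of_succ_sub_mem (x := fun M => yhat M i) hIanti (fun M => hdiff M i) hab
  have hstep : ∀ j i, yhat (e (j + 1)) i - yhat (e j) i ∈ I (e j + 1) := fun j i =>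
    htel (he j.le_succ) i
  refine hAP.exists_solution_sub_mem (IsNoetherian.noetherian _) F (yhat N) (fun j => yhat (e j))
    (htel (hNe 0)) (fun j i => hc _ ⟨hIe j (hIanti (e j).le_succ (hstep j i)),
      hIanti (Nat.succ_le_succ (hNe j)) (hstep j i)⟩)
    (fun j k => Ideal.pow_le_pow_right le_add_self (hIe j (hIanti (e j).le_succ (hF (e j) k))))

/-- Let `(R, 𝔪)` be a Noetherian local ring with AP for the `𝔪`-adic
filtration. Any filtration `I_•` with `I_{d_j} ⊆ 𝔪^j` for suitable `d_j` also has AP. -/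
theorem hasAP_of_le_maximalIdeal_pow
    {R : Type*} [CommRing R] [IsNoetherianRing R] [IsLocalRing R]
    (hAP : HasAP (fun j => IsLocalRing.maximalIdeal R ^ j))
    (I : ℕ → Ideal R) (hI0 : I 0 = ⊤) (hIanti : Antitone I)
    (hsub : ∀ j : ℕ, ∃ d : ℕ, I d ≤ IsLocalRing.maximalIdeal R ^ j) :
    HasAP I :=
  hasAP_of_le_maximalIdeal_pow_general hAP I hIanti hsub
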